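/- arXiv:1809.07440 — 6 statements merged into one kernel-verified Lean document; each statement's English description precedes it below -/
import Mathlib

section
/- Every Π⁰₂ subspace of a quasi-Polish space is quasi-Polish. -/
open TopologicalSpace Set Topology

/-- A Π⁰₂ set: a countable intersection of sets of the form (complement of open) ∪ open. -/
def IsPi02 {X : Type*} [TopologicalSpace X] (s : Set X) : Prop :=
  ∃ U V : ℕ → Set X, (∀ n, IsOpen (U n)) ∧ (∀ n, IsOpen (V n)) ∧
    s = ⋂ n, ((U n)ᶜ ∪ V n)

/-- A quasi-Polish space: homeomorphic to a Π⁰₂ subspace of 𝕊^ℕ,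
where 𝕊 is the Sierpiński space (`Prop` with its topology in Mathlib). -/
def QuasiPolish (X : Type*) [TopologicalSpace X] : Prop :=
  ∃ s : Set (ℕ → Prop), IsPi02 s ∧ Nonempty (X ≃ₜ s)

/-!
A Π⁰₂ subset `Y` of a subspace `X` of `𝕊^ℕ` is the trace on `X` of a Π⁰₂ subset `T` of `𝕊^ℕ`,
since open sets of `X` are traces of open sets. Hence `Y = X ∩ T` is an intersection of two
Π⁰₂ subsets of `𝕊^ℕ`, which is again Π⁰₂ by interleaving the two defining sequences.
-/

namespace IsPi02

variable {X Z : Type*} [TopologicalSpace X] [TopologicalSpace Z]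

theorem inter {s t : Set X} (hs : IsPi02 s) (ht : IsPi02 t) : IsPi02 (s ∩ t) := by
  obtain ⟨U₁, V₁, hU₁, hV₁, rfl⟩ := hs
  obtain ⟨U₂, V₂, hU₂, hV₂, rfl⟩ := ht
  have isOpen_elim {W₁ W₂ : ℕ → Set X} (h₁ : ∀ n, IsOpen (W₁ n)) (h₂ : ∀ n, IsOpen (W₂ n)) :
      ∀ i, IsOpen (Sum.elim W₁ W₂ i) :=
    Sum.forall.2 ⟨h₁, h₂⟩
  let e := Equiv.natSumNatEquivNat.symm
  refine ⟨fun n => Sum.elim U₁ U₂ (e n), fun n => Sum.elim V₁ V₂ (e n),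
    fun n => isOpen_elim hU₁ hU₂ (e n), fun n => isOpen_elim hV₁ hV₂ (e n), ?_⟩
  rw [e.surjective.iInter_comp (fun i => (Sum.elim U₁ U₂ i)ᶜ ∪ Sum.elim V₁ V₂ i), iInter_sum]
  rfl

theorem exists_eq_preimage {f : X → Z} (hf : IsInducing f) {s : Set X} (hs : IsPi02 s) :
    ∃ t : Set Z, IsPi02 t ∧ s = f ⁻¹' t := by
  obtain ⟨U, V, hU, hV, rfl⟩ := hs
  have trace (W : ℕ → Set X) (hW : ∀ n, IsOpen (W n)) :
      ∃ W' : ℕ → Set Z, (∀ n, IsOpen (W' n)) ∧ ∀ n, f ⁻¹' W' n = W n := by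
    choose W' hW'o hW' using fun n => hf.isOpen_iff.1 (hW n)
    exact ⟨W', hW'o, hW'⟩
  obtain ⟨U', hU'o, hU'⟩ := trace U hU
  obtain ⟨V', hV'o, hV'⟩ := trace V hV
  refine ⟨⋂ n, ((U' n)ᶜ ∪ V' n), ⟨U', V', hU'o, hV'o, rfl⟩, ?_⟩
  simp only [preimage_iInter, preimage_union, preimage_compl, hU', hV']

end IsPi02

theorem quasiPolish_iff_exists_isEmbedding {X : Type*} [TopologicalSpace X] :
    QuasiPolish X ↔ ∃ f : X → (ℕ → Prop), IsEmbedding f ∧ IsPi02 (range f) := by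
  constructor
  · rintro ⟨s, hs, ⟨e⟩⟩
    refine ⟨Subtype.val ∘ e, IsEmbedding.subtypeVal.comp e.isEmbedding, ?_⟩
    rwa [range_comp, e.range_coe, image_univ, Subtype.range_coe]
  · rintro ⟨f, hf, hrange⟩
    exact ⟨range f, hrange, ⟨hf.toHomeomorph⟩⟩

theorem quasiPolish_of_isPi02_subset {X : Type*} [TopologicalSpace X]
    (hX : QuasiPolish X) (Y : Set X) (hY : IsPi02 Y) : QuasiPolish Y := by
  obtain ⟨f, hf, hrange⟩ := quasiPolish_iff_exists_isEmbedding.1 hX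
  obtain ⟨T, hT, rfl⟩ := hY.exists_eq_preimage hf.isInducing
  refine quasiPolish_iff_exists_isEmbedding.2
    ⟨f ∘ Subtype.val, hf.comp IsEmbedding.subtypeVal, ?_⟩
  rw [range_comp, Subtype.range_coe, image_preimage_eq_inter_range]
  exact hT.inter hrange
end

section
/- If X is a quasi-Polish space, then X_⊥, the space obtained from X by adjoining a new point ⊥ whose only open neighborhood is the whole space (open sets of X_⊥ are the open sets of X together with X_⊥ itself), is quasi-Polish. -/
open TopologicalSpace Set Topology

/-- The topology on `X ⊔ {⊥}` (here `Option X`, with `⊥ = none`) whose open sets are the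
open sets of `X` (as subsets of `Option X` not containing `⊥`) together with the whole space. -/
noncomputable def botTopology (X : Type*) [TopologicalSpace X] :
    TopologicalSpace (Option X) :=
  generateFrom {s | ∃ u : Set X, IsOpen u ∧ s = Option.some '' u}

/-- Auxiliary embedding of `Option X` into `ℕ → Prop`, given an embedding `g` of `X`. -/
def botEmbed {X : Type*} (g : X → ℕ → Prop) : Option X → ℕ → Prop
  | none, _ => False
  | some _, 0 => True
  | some x, (k+1) => g x k

@[simp] lemma botEmbed_none {X : Type*} (g : X → ℕ → Prop) (n : ℕ) :
    botEmbed g none n = False := rfl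

@[simp] lemma botEmbed_some_zero {X : Type*} (g : X → ℕ → Prop) (x : X) :
    botEmbed g (some x) 0 = True := rfl

@[simp] lemma botEmbed_some_succ {X : Type*} (g : X → ℕ → Prop) (x : X) (k : ℕ) :
    botEmbed g (some x) (k+1) = g x k := rfl

lemma iInter_even_odd {α : Type*} (f : ℕ → Set α) :
    (⋂ k, f k) = (⋂ n, f (2*n)) ∩ (⋂ n, f (2*n+1)) := by
  ext x
  simp only [mem_iInter, mem_inter_iff]
  constructor
  · exact fun h => ⟨fun n => h _, fun n => h _⟩
  · rintro ⟨h1, h2⟩ k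
    rcases Nat.even_or_odd k with ⟨m, hm⟩ | ⟨m, hm⟩
    · have hk : k = 2*m := by omega
      rw [hk]; exact h1 m
    · rw [hm]; exact h2 m

lemma isPi02_inter {X : Type*} [TopologicalSpace X] {s t : Set X}
    (hs : IsPi02 s) (ht : IsPi02 t) : IsPi02 (s ∩ t) := by
  obtain ⟨U1, V1, hU1, hV1, hseq⟩ := hs
  obtain ⟨U2, V2, hU2, hV2, hteq⟩ := ht
  refine ⟨fun k => if Even k then U1 (k/2) else U2 (k/2),
          fun k => if Even k then V1 (k/2) else V2 (k/2), ?_, ?_, ?_⟩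
  · intro k; dsimp only; split
    · exact hU1 _
    · exact hU2 _
  · intro k; dsimp only; split
    · exact hV1 _
    · exact hV2 _
  · rw [iInter_even_odd, hseq, hteq]
    congr 1
    · refine iInter_congr fun n => ?_
      have he : Even (2*n) := ⟨n, by ring⟩
      have hd : 2*n/2 = n := by omega
      simp [he, hd]
    · refine iInter_congr fun n => ?_
      have ho : ¬ Even (2*n+1) := by
        simp [Nat.even_add_one, Nat.even_mul]
      have hd : (2*n+1)/2 = n := by omega
      simp [ho, hd]

theorem quasiPolish_bot {X : Type*} [TopologicalSpace X] (hX : QuasiPolish X) :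
    @QuasiPolish (Option X) (botTopology X) := by
  classical
  letI : TopologicalSpace (Option X) := botTopology X
  obtain ⟨s, ⟨U, V, hU, hV, hs⟩, ⟨e⟩⟩ := hX
  set g : X → ℕ → Prop := fun x => (e x : ℕ → Prop) with hg
  have hgc : Continuous g := continuous_subtype_val.comp e.continuous
  set f : Option X → ℕ → Prop := botEmbed g with hfdef
  set σ : (ℕ → Prop) → ℕ → Prop := fun p k => p (k + 1) with hσ
  have hσc : Continuous σ := continuous_pi fun k => continuous_apply (k+1)
  have hσf : ∀ x, σ (f (some x)) = g x := fun x => rfl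
  have hcoord : ∀ n : ℕ, IsOpen {p : ℕ → Prop | p n} :=
    fun n => continuous_Prop.mp (continuous_apply n)
  -- range of f as a Π⁰₂ set
  have hrange : range f =
      (⋂ n, ({p : ℕ → Prop | p (n+1)}ᶜ ∪ {p : ℕ → Prop | p 0})) ∩
      (⋂ n, (({p : ℕ → Prop | p 0} ∩ σ ⁻¹' (U n))ᶜ ∪ σ ⁻¹' (V n))) := by
    ext p
    simp only [mem_range, mem_inter_iff, mem_iInter, mem_union, mem_compl_iff,
      mem_setOf_eq, mem_preimage, mem_inter_iff, not_and]
    constructor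
    · rintro ⟨o, rfl⟩
      cases o with
      | none =>
        exact ⟨fun n => Or.inl (fun h => h), fun n => Or.inl (fun h h' => h)⟩
      | some x =>
        refine ⟨fun n => Or.inr trivial, fun n => ?_⟩
        have hxs : σ (f (some x)) ∈ s := by rw [hσf]; exact (e x).2
        rw [hs] at hxs
        rcases mem_iInter.mp hxs n with h | h
        · exact Or.inl fun _ hc => h hc
        · exact Or.inr h
    · rintro ⟨hE, hO⟩
      by_cases h0 : p 0
      · have hps : σ p ∈ s := by
          rw [hs]
          refine mem_iInter.mpr fun n => ?_
          rcases hO n with h | h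
          · exact Or.inl (h h0)
          · exact Or.inr h
        refine ⟨some (e.symm ⟨σ p, hps⟩), ?_⟩
        funext n
        cases n with
        | zero =>
          show (True : Prop) = p 0
          exact (eq_true h0).symm
        | succ k =>
          show g (e.symm ⟨σ p, hps⟩) k = p (k+1)
          have hgx : g (e.symm ⟨σ p, hps⟩) = σ p := by
            rw [hg]
            exact congrArg Subtype.val (e.apply_symm_apply ⟨σ p, hps⟩)
          exact congrFun hgx k
      · refine ⟨none, ?_⟩
        funext n
        cases n with
        | zero =>
          show (False : Prop) = p 0
          exact (eq_false h0).symm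
        | succ k =>
          show (False : Prop) = p (k+1)
          rcases hE k with h | h
          · exact (eq_false h).symm
          · exact absurd h h0
  -- continuity of f for the bottom topology
  have hcont : Continuous f := by
    refine continuous_pi fun n => ?_
    rw [continuous_Prop]
    cases n with
    | zero =>
      have h1 : {o : Option X | f o 0} = Option.some '' univ := by
        ext o; cases o <;> simp [hfdef]
      rw [h1]
      exact TopologicalSpace.GenerateOpen.basic _ ⟨univ, isOpen_univ, rfl⟩
    | succ k =>
      have h1 : {o : Option X | f o (k+1)} = Option.some '' {x | g x k} := by
        ext o; cases o <;> simp [hfdef]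
      have h2 : IsOpen {x : X | g x k} := (hcoord k).preimage hgc
      rw [h1]
      exact TopologicalSpace.GenerateOpen.basic _ ⟨{x | g x k}, h2, rfl⟩
  -- the bottom topology is induced by f
  have hle2 : TopologicalSpace.induced f Pi.topologicalSpace ≤ botTopology X := by
    apply le_generateFrom
    rintro t ⟨u, hu, rfl⟩
    rw [isOpen_induced_iff]
    obtain ⟨V₀, hV₀, hV₀eq⟩ := isOpen_induced_iff.mp (e.isOpenMap u hu)
    have hmem : ∀ x : X, g x ∈ V₀ ↔ x ∈ u := by
      intro x
      have h1 : e x ∈ Subtype.val ⁻¹' V₀ ↔ e x ∈ ⇑e '' u := by rw [hV₀eq]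
      simpa [e.injective.mem_set_image] using h1
    refine ⟨{p : ℕ → Prop | p 0} ∩ σ ⁻¹' V₀, (hcoord 0).inter (hV₀.preimage hσc), ?_⟩
    ext o
    cases o with
    | none => simp [hfdef]
    | some x =>
      simp only [mem_preimage, mem_inter_iff, mem_setOf_eq, hσf x]
      simp [hfdef, hmem x, (Option.some_injective X).mem_set_image]
  have htop : botTopology X = TopologicalSpace.induced f Pi.topologicalSpace :=
    le_antisymm (continuous_iff_le_induced.mp hcont) hle2
  -- injectivity of f
  have hinj : Function.Injective f := by
    intro a b h
    cases a with
    | none =>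
      cases b with
      | none => rfl
      | some y =>
        have h0 : (False : Prop) = True := congrFun h 0
        exact (h0.symm ▸ trivial : False).elim
    | some x =>
      cases b with
      | none =>
        have h0 : (True : Prop) = False := congrFun h 0
        exact (h0 ▸ trivial : False).elim
      | some y =>
        have hgxy : g x = g y := funext fun k => congrFun h (k+1)
        have : e x = e y := Subtype.coe_injective hgxy
        exact congrArg some (e.injective this)
  refine ⟨range f, ?_, ⟨?_⟩⟩
  · rw [hrange]
    exact isPi02_inter
      ⟨fun n => {p : ℕ → Prop | p (n+1)}, fun _ => {p : ℕ → Prop | p 0},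
        fun n => hcoord (n+1), fun _ => hcoord 0, rfl⟩
      ⟨fun n => {p : ℕ → Prop | p 0} ∩ σ ⁻¹' (U n), fun n => σ ⁻¹' (V n),
        fun n => (hcoord 0).inter ((hU n).preimage hσc),
        fun n => (hV n).preimage hσc, rfl⟩
  · refine (Equiv.ofInjective f hinj).toHomeomorphOfIsInducing ⟨?_⟩
    show botTopology X = _
    rw [htop]
    exact (induced_compose (g := (Subtype.val : range f → ℕ → Prop))
      (f := ⇑(Equiv.ofInjective f hinj))).symm
end

section
/- The real line ℝ is quasi-Polish: the map sending r to the Dedekind cut ({q ∈ ℚ : q < r}, {q ∈ ℚ : q > r}) is a homeomorphism of ℝ onto a Π⁰₂ subspace of 𝕊^ℚ × 𝕊^ℚ. -/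
open TopologicalSpace Set Topology

/-- The Dedekind cut map `r ↦ ({q : q < r}, {q : q > r})` into `𝕊^ℚ × 𝕊^ℚ`. -/
noncomputable def dedekind (r : ℝ) : (ℚ → Prop) × (ℚ → Prop) :=
  (fun q => (q : ℝ) < r, fun q => r < (q : ℝ))

/-! ### Auxiliary lemmas -/

section Aux

abbrev DD := (ℚ → Prop) × (ℚ → Prop)

lemma open_fst (q : ℚ) : IsOpen {x : DD | x.1 q} :=
  continuous_Prop.mp ((continuous_apply q).comp continuous_fst)

lemma open_snd (q : ℚ) : IsOpen {x : DD | x.2 q} :=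
  continuous_Prop.mp ((continuous_apply q).comp continuous_snd)

/-- A countable intersection of (closedᶜ ∪ open) over any countable nonempty index is Π⁰₂. -/
lemma isPi02_of_countable {X : Type*} [TopologicalSpace X] {ι : Type*} [Countable ι]
    [Nonempty ι] (U V : ι → Set X) (hU : ∀ i, IsOpen (U i)) (hV : ∀ i, IsOpen (V i)) :
    IsPi02 (⋂ i, ((U i)ᶜ ∪ V i)) := by
  obtain ⟨f, hf⟩ := exists_surjective_nat ι
  exact ⟨U ∘ f, V ∘ f, fun n => hU _, fun n => hV _,
    (hf.iInter_comp fun i => (U i)ᶜ ∪ V i).symm⟩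

/-- Index type for the defining clauses of Dedekind cuts. -/
inductive CutIdx where
  | down (q q' : ℚ)    -- lower cut downward closed
  | up (q q' : ℚ)      -- upper cut upward closed
  | disj (q : ℚ)       -- cuts disjoint
  | loc (q q' : ℚ)     -- locatedness
  | aopen (q : ℚ)      -- lower cut open (no maximum)
  | bopen (q : ℚ)      -- upper cut open (no minimum)
  | ane                -- lower cut nonempty
  | bne                -- upper cut nonempty
  deriving Inhabited

instance : Countable CutIdx := by
  have : Function.Injective (fun i : CutIdx =>
      match i with
      | .down q q' => (0, q, q')
      | .up q q' => (1, q, q')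
      | .disj q => (2, q, q)
      | .loc q q' => (3, q, q')
      | .aopen q => (4, q, q)
      | .bopen q => (5, q, q)
      | .ane => ((6 : ℕ), (0 : ℚ), (0 : ℚ))
      | .bne => (7, 0, 0)) := by
    intro i j h
    cases i <;> cases j <;> simp_all
  exact this.countable

def cutU : CutIdx → Set DD
  | .down q q' => ⋃ (_ : q' < q), {x | x.1 q}
  | .up q q' => ⋃ (_ : q < q'), {x | x.2 q}
  | .disj q  => {x | x.1 q} ∩ {x | x.2 q}
  | .loc q q' => ⋃ (_ : q < q'), univ
  | .aopen q  => {x | x.1 q}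
  | .bopen q  => {x | x.2 q}
  | _          => univ

def cutV : CutIdx → Set DD
  | .down _ q' => {x | x.1 q'}
  | .up _ q' => {x | x.2 q'}
  | .disj _  => ∅
  | .loc q q' => {x | x.1 q} ∪ {x | x.2 q'}
  | .aopen q  => ⋃ q', ⋃ (_ : q < q'), {x | x.1 q'}
  | .bopen q  => ⋃ q', ⋃ (_ : q' < q), {x | x.2 q'}
  | .ane  => ⋃ q, {x | x.1 q}
  | .bne  => ⋃ q, {x | x.2 q}

lemma cutU_open (i : CutIdx) : IsOpen (cutU i) := by
  cases i <;> simp only [cutU]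
  · exact isOpen_iUnion fun _ => open_fst _
  · exact isOpen_iUnion fun _ => open_snd _
  · exact (open_fst _).inter (open_snd _)
  · exact isOpen_iUnion fun _ => isOpen_univ
  · exact open_fst _
  · exact open_snd _
  · exact isOpen_univ
  · exact isOpen_univ

lemma cutV_open (i : CutIdx) : IsOpen (cutV i) := by
  cases i <;> simp only [cutV]
  · exact open_fst _
  · exact open_snd _
  · exact isOpen_empty
  · exact (open_fst _).union (open_snd _)
  · exact isOpen_iUnion fun p => isOpen_iUnion fun _ => open_fst p
  · exact isOpen_iUnion fun p => isOpen_iUnion fun _ => open_snd p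
  · exact isOpen_iUnion fun p => open_fst p
  · exact isOpen_iUnion fun p => open_snd p

lemma dedekind_injective : Function.Injective dedekind := by
  intro r s h
  by_contra hne
  rcases lt_or_gt_of_ne hne with hlt | hlt
  · obtain ⟨q, hq1, hq2⟩ := exists_rat_btwn hlt
    have := congrFun (congrArg Prod.fst h) q
    simp only [dedekind] at this
    rw [← this] at hq2
    exact absurd hq2 (not_lt.mpr hq1.le)
  · obtain ⟨q, hq1, hq2⟩ := exists_rat_btwn hlt
    have := congrFun (congrArg Prod.fst h) q
    simp only [dedekind] at this
    rw [this] at hq2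
    exact absurd hq2 (not_lt.mpr hq1.le)

lemma dedekind_mem_range_iff (x : DD) :
    x ∈ Set.range dedekind ↔ x ∈ ⋂ i, ((cutU i)ᶜ ∪ cutV i) := by
  constructor
  · rintro ⟨r, rfl⟩
    rw [mem_iInter]
    rintro i
    cases i <;> simp only [cutU, cutV, dedekind, mem_union, mem_compl_iff,
        mem_iUnion, mem_setOf_eq, mem_inter_iff, mem_empty_iff_false, or_false, mem_univ,
        compl_univ, not_true_eq_false, false_or]
    case down q q' =>
      rw [or_iff_not_imp_left, not_not]
      rintro ⟨hlt, hq⟩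
      exact lt_trans (by exact_mod_cast hlt) hq
    case up q q' =>
      rw [or_iff_not_imp_left, not_not]
      rintro ⟨hlt, hq⟩
      exact lt_trans hq (by exact_mod_cast hlt)
    case disj q =>
      rintro ⟨h1, h2⟩
      exact absurd (lt_trans h1 h2) (lt_irrefl _)
    case loc q q' =>
      rw [or_iff_not_imp_left, not_not]
      rintro ⟨hlt, -⟩
      rcases lt_or_ge (q : ℝ) r with h | h
      · exact Or.inl h
      · exact Or.inr (lt_of_le_of_lt h (by exact_mod_cast hlt))
    case aopen q =>
      rw [or_iff_not_imp_left, not_not]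
      intro hq
      obtain ⟨p, hp1, hp2⟩ := exists_rat_btwn hq
      exact ⟨p, by exact_mod_cast hp1, hp2⟩
    case bopen q =>
      rw [or_iff_not_imp_left, not_not]
      intro hq
      obtain ⟨p, hp1, hp2⟩ := exists_rat_btwn hq
      exact ⟨p, by exact_mod_cast hp2, hp1⟩
    case ane => exact exists_rat_lt r
    case bne => exact exists_rat_gt r
  · intro hx
    rw [mem_iInter] at hx
    set A : ℚ → Prop := x.1 with hA
    set B : ℚ → Prop := x.2 with hB
    -- extract the clauses
    have hdown : ∀ q q', q' < q → A q → A q' := by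
      intro q q' hlt hq
      have := hx (.down q q')
      simp only [cutU, cutV, mem_union, mem_compl_iff, mem_iUnion, mem_setOf_eq] at this
      rcases this with h | h
      · exact absurd ⟨hlt, hq⟩ h
      · exact h
    have hdisj : ∀ q, A q → B q → False := by
      intro q h1 h2
      have := hx (.disj q)
      simp only [cutU, cutV, mem_union, mem_compl_iff, mem_inter_iff, mem_setOf_eq,
        mem_empty_iff_false, or_false] at this
      exact this ⟨h1, h2⟩
    have hloc : ∀ q q', q < q' → A q ∨ B q' := by
      intro q q' hlt
      have := hx (.loc q q')
      simp only [cutU, cutV, mem_union, mem_compl_iff, mem_iUnion, mem_setOf_eq,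
        mem_univ, exists_const] at this
      rcases this with h | h
      · exact absurd ⟨hlt, trivial⟩ h
      · exact h
    have hAopen : ∀ q, A q → ∃ q', q < q' ∧ A q' := by
      intro q hq
      have := hx (.aopen q)
      simp only [cutU, cutV, mem_union, mem_compl_iff, mem_iUnion, mem_setOf_eq] at this
      rcases this with h | h
      · exact absurd hq h
      · obtain ⟨p, hp1, hp2⟩ := h; exact ⟨p, hp1, hp2⟩
    have hBopen : ∀ q, B q → ∃ q', q' < q ∧ B q' := by
      intro q hq
      have := hx (.bopen q)
      simp only [cutU, cutV, mem_union, mem_compl_iff, mem_iUnion, mem_setOf_eq] at this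
      rcases this with h | h
      · exact absurd hq h
      · obtain ⟨p, hp1, hp2⟩ := h; exact ⟨p, hp1, hp2⟩
    have hAne : ∃ q, A q := by
      have := hx .ane
      simp only [cutU, cutV, mem_union, mem_compl_iff, mem_univ, not_true_eq_false,
        false_or, mem_iUnion, mem_setOf_eq] at this
      exact this
    have hBne : ∃ q, B q := by
      have := hx .bne
      simp only [cutU, cutV, mem_union, mem_compl_iff, mem_univ, not_true_eq_false,
        false_or, mem_iUnion, mem_setOf_eq] at this
      exact this
    -- the real number
    set S : Set ℝ := (fun q : ℚ => (q : ℝ)) '' {q | A q} with hS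
    obtain ⟨q0, hq0⟩ := hAne
    obtain ⟨q1, hq1⟩ := hBne
    have hSne : S.Nonempty := ⟨(q0 : ℝ), ⟨q0, hq0, rfl⟩⟩
    have hub : ∀ q, B q → ∀ y ∈ S, y ≤ (q : ℝ) := by
      rintro q hq y ⟨p, hp, rfl⟩
      by_contra h
      push_neg at h
      have hpq : q < p := by
        have : (q : ℝ) < (p : ℝ) := by simpa using h
        exact_mod_cast this
      exact hdisj q (hdown p q hpq hp) hq
    have hbdd : BddAbove S := ⟨(q1 : ℝ), fun y hy => hub q1 hq1 y hy⟩
    set r : ℝ := sSup S with hr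
    have hAr : ∀ q, A q ↔ (q : ℝ) < r := by
      intro q
      constructor
      · intro hq
        obtain ⟨p, hp1, hp2⟩ := hAopen q hq
        calc (q : ℝ) < (p : ℝ) := by exact_mod_cast hp1
          _ ≤ r := le_csSup hbdd ⟨p, hp2, rfl⟩
      · intro hq
        obtain ⟨y, ⟨p, hp, rfl⟩, hy⟩ := exists_lt_of_lt_csSup hSne hq
        have hqp : (q : ℝ) < (p : ℝ) := by simpa using hy
        exact hdown p q (by exact_mod_cast hqp) hp
    have hBr : ∀ q, B q ↔ r < (q : ℝ) := by
      intro q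
      constructor
      · intro hq
        obtain ⟨p, hp1, hp2⟩ := hBopen q hq
        calc r ≤ (p : ℝ) := csSup_le hSne (hub p hp2)
          _ < (q : ℝ) := by exact_mod_cast hp1
      · intro hq
        obtain ⟨m, hm1, hm2⟩ := exists_rat_btwn hq
        rcases hloc m q (by exact_mod_cast hm2) with h | h
        · exact absurd ((hAr m).mp h) (not_lt.mpr hm1.le)
        · exact h
    refine ⟨r, ?_⟩
    have h1 : (fun q : ℚ => (q : ℝ) < r) = A := by
      funext q; exact propext (hAr q).symm
    have h2 : (fun q : ℚ => r < (q : ℝ)) = B := by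
      funext q; exact propext (hBr q).symm
    show ((fun q : ℚ => (q : ℝ) < r), (fun q : ℚ => r < (q : ℝ))) = x
    rw [h1, h2]

lemma dedekind_continuous : Continuous dedekind := by
  apply Continuous.prodMk
  · exact continuous_pi fun q => continuous_Prop.mpr isOpen_Ioi
  · exact continuous_pi fun q => continuous_Prop.mpr isOpen_Iio

lemma dedekind_inducing : IsInducing dedekind := by
  constructor
  refine le_antisymm (continuous_iff_le_induced.mp dedekind_continuous) ?_
  -- every open of ℝ is induced-open
  rw [Real.isTopologicalBasis_Ioo_rat.eq_generateFrom]
  refine le_generateFrom ?_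
  rintro s hs
  simp only [mem_iUnion, mem_singleton_iff] at hs
  obtain ⟨a, b, hab, rfl⟩ := hs
  have : Ioo (a : ℝ) (b : ℝ) = dedekind ⁻¹' ({x : DD | x.1 a} ∩ {x : DD | x.2 b}) := by
    ext r
    simp [dedekind, mem_Ioo, and_comm]
  rw [this]
  exact isOpen_induced ((open_fst a).inter (open_snd b))

end Aux

theorem real_quasiPolish_via_dedekind :
    IsEmbedding dedekind ∧ IsPi02 (Set.range dedekind) := by
  constructor
  · exact ⟨dedekind_inducing, dedekind_injective⟩
  · have : Set.range dedekind = ⋂ i, ((cutU i)ᶜ ∪ cutV i) := by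
      ext x; exact dedekind_mem_range_iff x
    rw [this]
    exact isPi02_of_countable cutU cutV cutU_open cutV_open
end

section
/- For a topological space X, the following are equivalent: (i) every Π⁰₂ subspace of X is a Baire space; (ii) every closed subspace of X is a Baire space; (iii) every nonempty closed subset F of X is non-meager in itself (with the subspace topology). -/
open TopologicalSpace Set Topology

section aux

variable {X : Type*} [TopologicalSpace X]

/-- If `C ∩ S` is dense in `C` at the level of sets, then `val ⁻¹' S` is dense in
the subtype `C`. -/
lemma dense_val_preimage {C S : Set X} (h : ∀ c ∈ C, c ∈ closure (C ∩ S)) :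
    Dense (Subtype.val ⁻¹' S : Set C) := by
  intro c
  rw [closure_subtype, Subtype.image_preimage_coe]
  exact h c c.2

/-- If a space has a countable family of dense open sets with empty intersection,
then it is meagre in itself. -/
lemma isMeagre_univ_of_empty_iInter {Y : Type*} [TopologicalSpace Y] {f : ℕ → Set Y}
    (ho : ∀ n, IsOpen (f n)) (hd : ∀ n, Dense (f n)) (he : ⋂ n, f n = ∅) :
    IsMeagre (Set.univ : Set Y) := by
  have hsub : (Set.univ : Set Y) ⊆ ⋃ n, (f n)ᶜ := by
    rw [← compl_iInter, he, compl_empty]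
  refine (isMeagre_iUnion fun n => ?_).mono hsub
  show ((f n)ᶜ)ᶜ ∈ residual Y
  rw [compl_compl]
  exact residual_of_dense_open (ho n) (hd n)

/-- Key nowhere-density lemma: if `S ⊆ Uᶜ ∪ V` with `U`, `V` open, then the trace of
`U \ V` on `closure S` is nowhere dense there. -/
lemma nowhereDense_val_preimage {S U V : Set X} (hU : IsOpen U) (hV : IsOpen V)
    (hS : S ⊆ Uᶜ ∪ V) :
    IsNowhereDense (Subtype.val ⁻¹' (U \ V) : Set (closure S : Set X)) := by
  set C : Set X := closure S with hCdef
  set T : Set C := Subtype.val ⁻¹' (U \ V) with hTdef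
  rw [IsNowhereDense, Set.eq_empty_iff_forall_notMem]
  intro c hc
  obtain ⟨t, htsub, htopen, hct⟩ := mem_interior.mp hc
  obtain ⟨G, hGopen, hGeq⟩ := isOpen_induced_iff.mp htopen
  -- every point of C ∩ G is in the closure of (U \ V) ∩ C
  have key : ∀ y : C, (y : X) ∈ G → (y : X) ∈ closure ((U \ V) ∩ C) := by
    intro y hy
    have : y ∈ closure T := htsub (hGeq ▸ (show y ∈ Subtype.val ⁻¹' G from hy))
    rw [closure_subtype, Subtype.image_preimage_coe] at this
    rwa [Set.inter_comm] at this
  -- c itself is in G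
  have hcG : (c : X) ∈ G := by
    have : c ∈ Subtype.val ⁻¹' G := hGeq ▸ hct
    exact this
  -- G meets (U \ V) ∩ C at some point p
  have hp := key c hcG
  obtain ⟨p, hpG, hpUV, hpC⟩ := (mem_closure_iff.mp hp) G hGopen hcG
  -- p ∈ closure S and p ∈ G ∩ U open, so S meets G ∩ U at some s
  have hs := (mem_closure_iff.mp hpC) (G ∩ U) (hGopen.inter hU) ⟨hpG, hpUV.1⟩
  obtain ⟨s, ⟨hsG, hsU⟩, hsS⟩ := hs
  have hsV : s ∈ V := by
    rcases hS hsS with h | h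
    · exact absurd hsU h
    · exact h
  have hsC : s ∈ C := subset_closure hsS
  -- s ∈ C ∩ G, so s ∈ closure ((U \ V) ∩ C); but V is an open nbhd of s disjoint from U \ V
  have := key ⟨s, hsC⟩ hsG
  obtain ⟨q, hqV, hqUV, _⟩ := (mem_closure_iff.mp this) V hV hsV
  exact hqUV.2 hqV

/-- If every nonempty closed subset of `X` is nonmeagre in itself, then every closed
subspace of `X` is a Baire space. -/
lemma baireSpace_closed_of_nonmeagre
    (P : ∀ F : Set X, IsClosed F → F.Nonempty → ¬ IsMeagre (Set.univ : Set F))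
    {F : Set X} (hF : IsClosed F) : BaireSpace F := by
  constructor
  intro f ho hd
  choose W hWopen hWeq using fun n => (isOpen_induced_iff.mp (ho n))
  intro x
  rw [closure_subtype, mem_closure_iff]
  intro G hGopen hxG
  by_contra hempty
  rw [Set.not_nonempty_iff_eq_empty] at hempty
  set C : Set X := closure (F ∩ G) with hCdef
  have hCF : C ⊆ F := closure_minimal inter_subset_left hF
  have hCne : C.Nonempty := ⟨x, subset_closure ⟨x.2, hxG⟩⟩
  apply P C isClosed_closure hCne
  have hopen : ∀ n, IsOpen (Subtype.val ⁻¹' (W n ∩ G) : Set C) := fun n =>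
    ((hWopen n).inter hGopen).preimage continuous_subtype_val
  have hdense : ∀ n, Dense (Subtype.val ⁻¹' (W n ∩ G) : Set C) := by
    intro n
    apply dense_val_preimage
    intro c hc
    rw [mem_closure_iff]
    intro H hHopen hcH
    obtain ⟨y, hyH, hyF, hyG⟩ := (mem_closure_iff.mp hc) H hHopen hcH
    have : (⟨y, hyF⟩ : F) ∈ closure (f n) := hd n _
    rw [closure_subtype] at this
    have himg : (Subtype.val '' (f n) : Set X) = F ∩ W n := by
      rw [← hWeq n, Subtype.image_preimage_coe]
    rw [himg] at this
    obtain ⟨z, ⟨hzH, hzG⟩, hzF, hzW⟩ := (mem_closure_iff.mp this) (H ∩ G)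
      (hHopen.inter hGopen) ⟨hyH, hyG⟩
    exact ⟨z, hzH, subset_closure ⟨hzF, hzG⟩, hzW, hzG⟩
  have hiInter : ⋂ n, (Subtype.val ⁻¹' (W n ∩ G) : Set C) = ∅ := by
    rw [Set.eq_empty_iff_forall_notMem]
    intro c hcmem
    simp only [Set.mem_iInter, Set.mem_preimage, Set.mem_inter_iff] at hcmem
    have hcF : (c : X) ∈ F := hCF c.2
    have : (c : X) ∈ G ∩ Subtype.val '' ⋂ n, f n := by
      refine ⟨(hcmem 0).2, ⟨(⟨(c : X), hcF⟩ : F), ?_, rfl⟩⟩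
      rw [Set.mem_iInter]
      intro n
      rw [← hWeq n]
      exact (hcmem n).1
    rw [hempty] at this
    exact this
  exact isMeagre_univ_of_empty_iInter hopen hdense hiInter

end aux

theorem completelyBaire_tfae {X : Type*} [TopologicalSpace X] :
    List.TFAE
      [∀ Y : Set X, IsPi02 Y → BaireSpace Y,
       ∀ Y : Set X, IsClosed Y → BaireSpace Y,
       ∀ F : Set X, IsClosed F → F.Nonempty → ¬ IsMeagre (Set.univ : Set F)] := by
  tfae_have 1 → 2 := by
    intro h1 Y hY
    exact h1 Y ⟨fun _ => Yᶜ, fun _ => ∅, fun _ => hY.isOpen_compl, fun _ => isOpen_empty,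
      by simp [Set.iInter_const]⟩
  tfae_have 2 → 3 := by
    intro h2 F hF hne hm
    haveI := h2 F hF
    haveI : Nonempty F := hne.to_subtype
    have hres : (∅ : Set F) ∈ residual F := by
      have := hm
      rwa [IsMeagre, compl_univ] at this
    have hd : Dense (∅ : Set F) := dense_of_mem_residual hres
    exact Set.not_nonempty_empty hd.nonempty
  tfae_have 3 → 1 := by
    intro P Y hY
    obtain ⟨U, V, hUopen, hVopen, hYeq⟩ := hY
    constructor
    intro f ho hd
    choose W hWopen hWeq using fun n => (isOpen_induced_iff.mp (ho n))
    intro x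
    rw [closure_subtype, mem_closure_iff]
    intro G hGopen hxG
    set C : Set X := closure (Y ∩ G) with hCdef
    have hCne : C.Nonempty := ⟨x, subset_closure ⟨x.2, hxG⟩⟩
    haveI : Nonempty C := hCne.to_subtype
    haveI : BaireSpace C := baireSpace_closed_of_nonmeagre P isClosed_closure
    -- the dense open sets in C
    set g : ℕ → Set C := fun n =>
      (Subtype.val ⁻¹' (W n ∩ G)) ∩ (closure (Subtype.val ⁻¹' (U n \ V n) : Set C))ᶜ
      with hgdef
    have hYsub : ∀ n, Y ⊆ (U n)ᶜ ∪ V n := by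
      intro n y hy
      rw [hYeq] at hy
      exact Set.mem_iInter.mp hy n
    have hnd : ∀ n, IsNowhereDense (Subtype.val ⁻¹' (U n \ V n) : Set C) := by
      intro n
      exact nowhereDense_val_preimage (hUopen n) (hVopen n)
        (fun y hy => hYsub n hy.1)
    have hgopen : ∀ n, IsOpen (g n) := by
      intro n
      exact (((hWopen n).inter hGopen).preimage continuous_subtype_val).inter
        isClosed_closure.isOpen_compl
    have hgdense : ∀ n, Dense (g n) := by
      intro n
      have h1 : Dense (Subtype.val ⁻¹' (W n ∩ G) : Set C) := by
        apply dense_val_preimage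
        intro c hc
        rw [mem_closure_iff]
        intro H hHopen hcH
        obtain ⟨y, hyH, hyY, hyG⟩ := (mem_closure_iff.mp hc) H hHopen hcH
        have : (⟨y, hyY⟩ : Y) ∈ closure (f n) := hd n _
        rw [closure_subtype] at this
        have himg : (Subtype.val '' (f n) : Set X) = Y ∩ W n := by
          rw [← hWeq n, Subtype.image_preimage_coe]
        rw [himg] at this
        obtain ⟨z, ⟨hzH, hzG⟩, hzY, hzW⟩ := (mem_closure_iff.mp this) (H ∩ G)
          (hHopen.inter hGopen) ⟨hyH, hyG⟩
        exact ⟨z, hzH, subset_closure ⟨hzY, hzG⟩, hzW, hzG⟩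
      have h2 : Dense ((closure (Subtype.val ⁻¹' (U n \ V n) : Set C))ᶜ) := by
        rw [← interior_eq_empty_iff_dense_compl]
        exact hnd n
      exact h1.inter_of_isOpen_left h2
        (((hWopen n).inter hGopen).preimage continuous_subtype_val)
    have hdense : Dense (⋂ n, g n) := dense_iInter_of_isOpen hgopen hgdense
    obtain ⟨c, hc⟩ := hdense.nonempty
    simp only [Set.mem_iInter] at hc
    have hcY : (c : X) ∈ Y := by
      rw [hYeq, Set.mem_iInter]
      intro n
      have : c ∉ (Subtype.val ⁻¹' (U n \ V n) : Set C) :=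
        fun h => (hc n).2 (subset_closure h)
      by_cases hU : (c : X) ∈ U n
      · right
        by_contra hV
        exact this ⟨hU, hV⟩
      · left; exact hU
    refine ⟨(c : X), (hc 0).1.2, ⟨(⟨(c : X), hcY⟩ : Y), ?_, rfl⟩⟩
    rw [Set.mem_iInter]
    intro n
    rw [← hWeq n]
    exact (hc n).1.1
  tfae_finish
end

section
/- For any index set I, every closed subspace of the product 𝕊^I of Sierpiński spaces is a Baire space. Consequently every Π⁰₂ subspace of 𝕊^I, and in particular every quasi-Polish space, is completely Baire. -/
open TopologicalSpace Set Topology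

/-- Open sets of `Prop` (Sierpiński space) are upward closed. -/
lemma prop_open_up {u : Set Prop} (hu : IsOpen u) {p q : Prop} (hp : p ∈ u) (h : p → q) :
    q ∈ u := by
  have hu' : TopologicalSpace.GenerateOpen {{True}} u := hu
  clear hu
  revert hp
  induction hu' with
  | basic s hs =>
    intro hp
    rcases hs with rfl
    rcases hp with rfl
    exact eq_true (h trivial)
  | univ => intro _; trivial
  | inter s t _ _ ihs iht => intro hp; exact ⟨ihs hp.1, iht hp.2⟩
  | sUnion S _ ih =>
    rintro ⟨ts, hts, hpts⟩
    exact ⟨ts, hts, ih ts hts hpts⟩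

/-- Every open set of `𝕊^I` containing `x` contains a finite-support basic open
neighbourhood of `x` of the form `{y | ∀ i ∈ t, y i}`. -/
lemma sier_cert {I : Type} {U : Set (I → Prop)} (hU : IsOpen U) {x : I → Prop} (hx : x ∈ U) :
    ∃ t : Finset I, (∀ i ∈ t, x i) ∧ ∀ y : I → Prop, (∀ i ∈ t, y i) → y ∈ U := by
  classical
  obtain ⟨s, u, h1, h2⟩ := isOpen_pi_iff.1 hU x hx
  refine ⟨s.filter (fun i => x i), fun i hi => (Finset.mem_filter.1 hi).2, fun y hy => ?_⟩
  apply h2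
  intro i hi
  have hi' : i ∈ s := hi
  exact prop_open_up (h1 i hi').1 (h1 i hi').2
    (fun hxi => hy i (Finset.mem_filter.2 ⟨hi', hxi⟩))

lemma isOpen_sier_basic {I : Type} (t : Finset I) :
    IsOpen {y : I → Prop | ∀ i ∈ t, y i} := by
  have : {y : I → Prop | ∀ i ∈ t, y i} = ⋂ i ∈ t, {y : I → Prop | y i} := by
    ext y; simp
  rw [this]
  exact isOpen_biInter_finset fun i _ => continuous_Prop.1 (continuous_apply i)

/-- Closed sets of `𝕊^I` are downward closed. -/
lemma sier_closed_down {I : Type} {F : Set (I → Prop)} (hF : IsClosed F) {x z : I → Prop}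
    (hx : x ∈ F) (h : ∀ i, z i → x i) : z ∈ F := by
  by_contra hz
  obtain ⟨t, ht1, ht2⟩ := sier_cert hF.isOpen_compl hz
  exact (ht2 x fun i hi => h i (ht1 i hi)) hx

/-- Closed sets of `𝕊^I` are closed under suprema of increasing chains. -/
lemma sier_closed_chain {I : Type} {F : Set (I → Prop)} (hF : IsClosed F) {z : ℕ → I → Prop}
    (hz : ∀ n, z n ∈ F) (hmono : ∀ n m, n ≤ m → ∀ i, z n i → z m i) :
    (fun i => ∃ n, z n i) ∈ F := by
  classical
  by_contra hy
  obtain ⟨t, ht1, ht2⟩ := sier_cert hF.isOpen_compl hy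
  have h' : ∀ i, ∃ n, i ∈ t → z n i := by
    intro i
    by_cases hi : i ∈ t
    · exact (ht1 i hi).imp fun n hn _ => hn
    · exact ⟨0, fun h => absurd h hi⟩
  choose w hw using h'
  exact ht2 (z (t.sup w))
    (fun i hi => hmono (w i) _ (Finset.le_sup hi) i (hw i hi)) (hz _)

/-- Invariant for the recursive construction in the main Baire category argument. -/
def SierInv {I : Type} (W' : Set (I → Prop)) (G U V : ℕ → Set (I → Prop))
    (A : Set (I → Prop)) (n : ℕ) (p : (I → Prop) × Finset I) : Prop :=
  p.1 ∈ A ∧ (∀ i ∈ p.2, p.1 i) ∧ (∀ y : I → Prop, (∀ i ∈ p.2, y i) → y ∈ W') ∧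
  (∀ k < n, ∀ y : I → Prop, (∀ i ∈ p.2, y i) → y ∈ G k) ∧
  (∀ j < n, p.1 ∈ U j → ∀ y : I → Prop, (∀ i ∈ p.2, y i) → y ∈ V j)

/-- Main lemma: the intersection of a closed subset of `𝕊^I` with a Π⁰₂ subset is a
Baire space in the subspace topology. -/
theorem sier_baire (I : Type) (D : Set (I → Prop)) (hD : IsClosed D)
    (U V : ℕ → Set (I → Prop)) (hU : ∀ n, IsOpen (U n)) (hV : ∀ n, IsOpen (V n)) :
    BaireSpace ↥(D ∩ ⋂ n, ((U n)ᶜ ∪ V n)) := by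
  classical
  set A := D ∩ ⋂ n, ((U n)ᶜ ∪ V n) with hA
  constructor
  intro f hfo hfd
  have hG : ∀ n, ∃ Gn : Set (I → Prop), IsOpen Gn ∧ Subtype.val ⁻¹' Gn = f n := fun n =>
    isOpen_induced_iff.1 (hfo n)
  choose G hGo hGf using hG
  rw [dense_iff_inter_open]
  rintro O hO ⟨⟨x₀, hx₀A⟩, hx₀O⟩
  obtain ⟨W', hW'o, hW'⟩ := isOpen_induced_iff.1 hO
  have hx₀W' : x₀ ∈ W' := by rw [← hW'] at hx₀O; exact hx₀O
  -- the one-step extension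
  have key : ∀ n p, SierInv W' G U V A n p →
      ∃ q, SierInv W' G U V A (n + 1) q ∧ p.2 ⊆ q.2 := by
    rintro n ⟨x, t⟩ ⟨hxA, hxt, hW, hGk, hVj⟩
    have hTopen : IsOpen {y : I → Prop | ∀ i ∈ t, y i} := isOpen_sier_basic t
    have hmem : (⟨x, hxA⟩ : A) ∈ Subtype.val ⁻¹' {y : I → Prop | ∀ i ∈ t, y i} := hxt
    obtain ⟨⟨x', hx'A⟩, hx'T, hx'f⟩ :=
      (mem_closure_iff.1 (hfd n ⟨x, hxA⟩)) _ (hTopen.preimage continuous_subtype_val) hmem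
    have hx'G : x' ∈ G n := by rw [← hGf n] at hx'f; exact hx'f
    obtain ⟨c, hc1, hc2⟩ := sier_cert (hGo n) hx'G
    have hx'T' : ∀ i ∈ t, x' i := hx'T
    have hVsel : ∀ j, ∃ s : Finset I, (∀ i ∈ s, x' i) ∧
        (j < n + 1 → x' ∈ U j → ∀ y : I → Prop, (∀ i ∈ s, y i) → y ∈ V j) := by
      intro j
      by_cases h : j < n + 1 ∧ x' ∈ U j
      · have hx'V : x' ∈ V j := by
          rcases mem_iInter.1 hx'A.2 j with h1 | h2
          · exact absurd h.2 h1
          · exact h2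
        obtain ⟨s, hs1, hs2⟩ := sier_cert (hV j) hx'V
        exact ⟨s, hs1, fun _ _ => hs2⟩
      · exact ⟨∅, fun i hi => absurd hi (Finset.notMem_empty i),
          fun h1 h2 => absurd ⟨h1, h2⟩ h⟩
    choose S hS1 hS2 using hVsel
    refine ⟨(x', t ∪ c ∪ (Finset.range (n + 1)).biUnion S), ⟨hx'A, ?_, ?_, ?_, ?_⟩, ?_⟩
    · intro i hi
      rcases Finset.mem_union.1 hi with hi' | hi'
      · rcases Finset.mem_union.1 hi' with h1 | h2
        · exact hx'T' i h1
        · exact hc1 i h2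
      · obtain ⟨j, _, hij⟩ := Finset.mem_biUnion.1 hi'
        exact hS1 j i hij
    · intro y hy
      exact hW y fun i hi => hy i (Finset.mem_union_left _ (Finset.mem_union_left _ hi))
    · intro k hk y hy
      rcases Nat.lt_succ_iff_lt_or_eq.1 hk with hk' | rfl
      · exact hGk k hk' y fun i hi =>
          hy i (Finset.mem_union_left _ (Finset.mem_union_left _ hi))
      · exact hc2 y fun i hi =>
          hy i (Finset.mem_union_left _ (Finset.mem_union_right _ hi))
    · intro j hj hUj y hy
      refine hS2 j hj hUj y fun i hi => hy i (Finset.mem_union_right _ ?_)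
      exact Finset.mem_biUnion.2 ⟨j, Finset.mem_range.2 hj, hi⟩
    · intro i hi
      exact Finset.mem_union_left _ (Finset.mem_union_left _ hi)
  -- the base point
  obtain ⟨c₀, hc₀1, hc₀2⟩ := sier_cert hW'o hx₀W'
  have h0 : SierInv W' G U V A 0 (x₀, c₀) :=
    ⟨hx₀A, hc₀1, hc₀2, fun k hk => absurd hk (Nat.not_lt_zero k),
      fun j hj => absurd hj (Nat.not_lt_zero j)⟩
  -- the recursively defined sequence
  let g : ∀ n : ℕ, {p : (I → Prop) × Finset I // SierInv W' G U V A n p} :=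
    fun n => Nat.rec ⟨(x₀, c₀), h0⟩
      (fun n ih => ⟨(key n ih.1 ih.2).choose, (key n ih.1 ih.2).choose_spec.1⟩) n
  have hgstep : ∀ n, (g n).1.2 ⊆ (g (n + 1)).1.2 := fun n =>
    (key n (g n).1 (g n).2).choose_spec.2
  set x : ℕ → I → Prop := fun n => (g n).1.1 with hx
  set t : ℕ → Finset I := fun n => (g n).1.2 with ht
  have hginv : ∀ n, SierInv W' G U V A n ((g n).1) := fun n => (g n).2
  have hmono : ∀ n m, n ≤ m → t n ⊆ t m := by
    intro n m hnm
    induction m, hnm using Nat.le_induction with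
    | base => exact subset_rfl
    | succ m _ ih => exact ih.trans (hgstep m)
  -- the limit point
  set y : I → Prop := fun i => ∃ n, ∀ m, n ≤ m → x m i with hy
  have hyT : ∀ n, ∀ i ∈ t n, y i := by
    intro n i hi
    exact ⟨n, fun m hm => (hginv m).2.1 i (hmono n m hm hi)⟩
  have hyD : y ∈ D := by
    have := sier_closed_chain hD (z := fun n i => ∀ m, n ≤ m → x m i)
      (fun n => sier_closed_down hD (hginv n).1.1 (fun i h => h n le_rfl))
      (fun n m hnm i hi k hk => hi k (hnm.trans hk))
    exact this
  have hyPi : y ∈ ⋂ n, ((U n)ᶜ ∪ V n) := by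
    rw [mem_iInter]
    intro n
    by_cases hyU : y ∈ U n
    · right
      obtain ⟨s, hs1, hs2⟩ := sier_cert (hU n) hyU
      have h' : ∀ i, ∃ m, i ∈ s → ∀ k, m ≤ k → x k i := by
        intro i
        by_cases hi : i ∈ s
        · exact (hs1 i hi).imp fun m hm _ => hm
        · exact ⟨0, fun h => absurd h hi⟩
      choose w hw using h'
      set N := max (n + 1) (s.sup w) with hN
      have hxN : x N ∈ U n := hs2 (x N) fun i hi =>
        hw i hi N ((Finset.le_sup hi).trans (le_max_right _ _))
      have hnN : n < N := lt_of_lt_of_le (Nat.lt_succ_self n) (le_max_left _ _)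
      exact (hginv N).2.2.2.2 n hnN hxN y (hyT N)
    · left; exact hyU
  have hyA : y ∈ A := ⟨hyD, hyPi⟩
  refine ⟨⟨y, hyA⟩, ?_, ?_⟩
  · rw [← hW']
    exact (hginv 0).2.2.1 y (hyT 0)
  · rw [mem_iInter]
    intro n
    rw [← hGf n]
    exact (hginv (n + 1)).2.2.2.1 n (Nat.lt_succ_self n) y (hyT (n + 1))

/-- Baire-ness transfers along homeomorphisms. -/
lemma baireSpace_of_homeomorph {X Y : Type*} [TopologicalSpace X] [TopologicalSpace Y]
    (e : X ≃ₜ Y) [BaireSpace Y] : BaireSpace X := by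
  constructor
  intro f hfo hfd
  have h1 : ∀ n, IsOpen (e.symm ⁻¹' f n) := fun n => (hfo n).preimage e.symm.continuous
  have h2 : ∀ n, Dense (e.symm ⁻¹' f n) := fun n => (hfd n).preimage e.symm.isOpenMap
  have h3 : Dense (⋂ n, e.symm ⁻¹' f n) := dense_iInter_of_isOpen h1 h2
  have h4 : Dense (e ⁻¹' ⋂ n, e.symm ⁻¹' f n) := h3.preimage e.isOpenMap
  have heq : (⋂ n, f n) = e ⁻¹' ⋂ n, e.symm ⁻¹' f n := by
    ext z; simp
  rw [heq]
  exact h4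

/-- A subtype of a subtype is homeomorphic to the corresponding intersection. -/
def subsubHomeo {X : Type*} [TopologicalSpace X] (s D : Set X) :
    ↥(Subtype.val ⁻¹' D : Set ↥s) ≃ₜ ↥(D ∩ s) where
  toFun a := ⟨a.1.1, a.2, a.1.2⟩
  invFun b := ⟨⟨b.1, b.2.2⟩, b.2.1⟩
  left_inv _ := rfl
  right_inv _ := rfl
  continuous_toFun :=
    Continuous.subtype_mk (continuous_subtype_val.comp continuous_subtype_val) _
  continuous_invFun :=
    Continuous.subtype_mk (Continuous.subtype_mk continuous_subtype_val _) _

theorem baire_category_sierpinski :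
    (∀ (I : Type) (F : Set (I → Prop)), IsClosed F → BaireSpace F) ∧
    (∀ (I : Type) (s : Set (I → Prop)), IsPi02 s →
      ∀ C : Set s, IsClosed C → BaireSpace C) ∧
    (∀ (X : Type) [TopologicalSpace X], QuasiPolish X →
      ∀ C : Set X, IsClosed C → BaireSpace C) := by
  have part1 : ∀ (I : Type) (F : Set (I → Prop)), IsClosed F → BaireSpace F := by
    intro I F hF
    have hB := sier_baire I F hF (fun _ => ∅) (fun _ => ∅) (fun _ => isOpen_empty)
      (fun _ => isOpen_empty)
    have hEq : F = F ∩ ⋂ _n : ℕ, ((∅ : Set (I → Prop))ᶜ ∪ ∅) := by simp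
    rw [hEq]
    exact hB
  have part2 : ∀ (I : Type) (s : Set (I → Prop)), IsPi02 s →
      ∀ C : Set s, IsClosed C → BaireSpace C := by
    intro I s hs C hC
    obtain ⟨U, V, hU, hV, rfl⟩ := hs
    obtain ⟨D, hD, rfl⟩ := isClosed_induced_iff.1 hC
    have hB : BaireSpace ↥(D ∩ ⋂ n, ((U n)ᶜ ∪ V n)) := sier_baire I D hD U V hU hV
    exact baireSpace_of_homeomorph (subsubHomeo _ D)
  refine ⟨part1, part2, ?_⟩
  intro X _ hQP C hC
  obtain ⟨s, hs, ⟨e⟩⟩ := hQP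
  have hclosed : IsClosed (e '' C) := e.isClosedMap C hC
  have hB : BaireSpace ↥(e '' C) := part2 ℕ s hs (e '' C) hclosed
  exact baireSpace_of_homeomorph (e.image C)
end

section
/- Every quasi-Polish space is sober: for every irreducible closed subset F there is a unique point x with F = closure {x}. -/
open TopologicalSpace Set Topology

/-- Specialization in the Sierpiński space. -/
lemma specializes_prop_iff {a b : Prop} : a ⤳ b ↔ (b → a) := by
  constructor
  · intro h hb
    have hopen : IsOpen {p : Prop | p} := continuous_Prop.mp continuous_id
    exact h.mem_open hopen hb
  · intro h
    rw [specializes_iff_nhds]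
    by_cases hb : b
    · have : a = b := propext ⟨fun _ => hb, fun _ => h hb⟩
      rw [this]
    · have : b = False := eq_false hb
      rw [this, nhds_false]
      exact le_top

lemma isOpen_eval {n : ℕ} : IsOpen {q : ℕ → Prop | q n} :=
  continuous_Prop.mp (continuous_apply n)

theorem quasiPolish_sober {X : Type*} [TopologicalSpace X] (hX : QuasiPolish X)
    (F : Set X) (hF : IsClosed F) (hne : F.Nonempty)
    (hirr : ∀ G H : Set X, IsClosed G → IsClosed H → F ⊆ G ∪ H → F ⊆ G ∨ F ⊆ H) :
    ∃! x : X, F = closure ({x} : Set X) := by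
  classical
  obtain ⟨s, ⟨U, V, hU, hV, hs⟩, ⟨e⟩⟩ := hX
  -- the embedding of X into 𝕊^ℕ
  set m : X → (ℕ → Prop) := fun a => (e a : ℕ → Prop) with hm
  have hmc : Continuous m := continuous_subtype_val.comp e.continuous
  have hmind : IsInducing m :=
    IsInducing.subtypeVal.comp e.isInducing
  have hminj : Function.Injective m := fun a b hab =>
    e.injective (Subtype.val_injective hab)
  -- the image of F
  set F' : Set (ℕ → Prop) := m '' F with hF'
  have hF'ne : F'.Nonempty := hne.image m
  have hF's : F' ⊆ s := by rintro p ⟨a, _, rfl⟩; exact (e a).2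
  -- preirreducibility of F' w.r.t. opens
  have hirr' : ∀ W₁ W₂ : Set (ℕ → Prop), IsOpen W₁ → IsOpen W₂ →
      (F' ∩ W₁).Nonempty → (F' ∩ W₂).Nonempty → (F' ∩ (W₁ ∩ W₂)).Nonempty := by
    intro W₁ W₂ hW₁ hW₂ h₁ h₂
    by_contra hcon
    rw [Set.not_nonempty_iff_eq_empty] at hcon
    have hsub : F ⊆ (m ⁻¹' W₁ᶜ) ∪ (m ⁻¹' W₂ᶜ) := by
      intro a ha
      by_contra hno
      simp only [Set.mem_union, Set.mem_preimage, Set.mem_compl_iff, not_or, not_not] at hno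
      have : m a ∈ F' ∩ (W₁ ∩ W₂) := ⟨⟨a, ha, rfl⟩, hno.1, hno.2⟩
      rw [hcon] at this; exact this
    rcases hirr _ _ (hW₁.isClosed_compl.preimage hmc) (hW₂.isClosed_compl.preimage hmc) hsub with
      h | h
    · obtain ⟨p, ⟨a, ha, rfl⟩, hp⟩ := h₁
      exact h ha hp
    · obtain ⟨p, ⟨a, ha, rfl⟩, hp⟩ := h₂
      exact h ha hp
  -- finite irreducibility
  have hfin : ∀ t : Finset ℕ, (∀ n ∈ t, ∃ p ∈ F', p n) → ∃ p ∈ F', ∀ n ∈ t, p n := by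
    intro t
    induction t using Finset.induction_on with
    | empty => intro _; obtain ⟨p, hp⟩ := hF'ne; exact ⟨p, hp, by simp⟩
    | @insert a t ha ih =>
      intro h
      obtain ⟨p, hp, hpa⟩ := h a (Finset.mem_insert_self a t)
      obtain ⟨q, hq, hqt⟩ := ih (fun n hn => h n (Finset.mem_insert_of_mem hn))
      have hW₂ : IsOpen (⋂ n ∈ t, {q : ℕ → Prop | q n}) :=
        isOpen_biInter_finset fun n _ => isOpen_eval
      obtain ⟨r, hr, hr₁, hr₂⟩ := hirr' {q : ℕ → Prop | q a} (⋂ n ∈ t, {q : ℕ → Prop | q n})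
        isOpen_eval hW₂ ⟨p, hp, hpa⟩ ⟨q, hq, by simpa using hqt⟩
      refine ⟨r, hr, ?_⟩
      intro n hn
      rcases Finset.mem_insert.mp hn with rfl | hn
      · exact hr₁
      · exact Set.mem_iInter₂.mp hr₂ n hn
  -- the candidate generic point in 𝕊^ℕ
  set x : ℕ → Prop := fun n => ∃ p ∈ F', p n with hx
  have hle : ∀ p ∈ F', x ⤳ p := by
    intro p hp
    rw [specializes_pi]
    intro n
    exact specializes_prop_iff.mpr fun h => ⟨p, hp, h⟩
  -- every open set containing x meets F'
  have hgen : ∀ W : Set (ℕ → Prop), IsOpen W → x ∈ W → (F' ∩ W).Nonempty := by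
    intro W hW hxW
    obtain ⟨I, u, h1, h2⟩ := isOpen_pi_iff.mp hW x hxW
    set t : Finset ℕ := I.filter (fun i => x i) with ht
    obtain ⟨p, hp, hpt⟩ := hfin t (fun n hn => (Finset.mem_filter.mp hn).2)
    have hpx : ∀ i ∈ I, p i = x i := by
      intro i hi
      refine propext ⟨fun h => ⟨p, hp, h⟩, fun h => hpt i (Finset.mem_filter.mpr ⟨hi, h⟩)⟩
    refine ⟨p, hp, h2 ?_⟩
    intro i hi
    rw [hpx i hi]
    exact (h1 i hi).2
  -- x belongs to s
  have hxs : x ∈ s := by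
    rw [hs, Set.mem_iInter]
    intro n
    by_cases hxU : x ∈ U n
    · obtain ⟨p, hpF, hpU⟩ := hgen (U n) (hU n) hxU
      have hps : p ∈ s := hF's hpF
      rw [hs, Set.mem_iInter] at hps
      rcases hps n with h | h
      · exact absurd hpU h
      · exact Or.inr ((hle p hpF).mem_open (hV n) h)
    · exact Or.inl hxU
  set x₀ : X := e.symm ⟨x, hxs⟩ with hx₀
  have hmx₀ : m x₀ = x := by
    simp only [hm, hx₀, Homeomorph.apply_symm_apply]
  -- x₀ ∈ F
  have hx₀F : x₀ ∈ F := by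
    have hclosed : IsClosed (m '' F) ∨ True := Or.inr trivial
    -- m '' F is the image under the embedding; F closed in X means m '' F = C ∩ range m
    -- use: e '' F closed in s
    have heF : IsClosed (e '' F) := (e.isClosedMap) F hF
    obtain ⟨C, hC, hCe⟩ := isClosed_induced_iff.mp heF
    have hF'C : F' ⊆ C := by
      rintro p ⟨a, ha, rfl⟩
      have : e a ∈ Subtype.val ⁻¹' C := hCe ▸ Set.mem_image_of_mem e ha
      exact this
    have hxC : x ∈ C := by
      have : x ∈ closure F' := by
        rw [mem_closure_iff]
        intro o ho hxo
        obtain ⟨p, hp, hpo⟩ := hgen o ho hxo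
        exact ⟨p, hpo, hp⟩
      exact closure_minimal hF'C hC this
    have : (⟨x, hxs⟩ : s) ∈ e '' F := by
      rw [← hCe]; exact hxC
    obtain ⟨a, ha, hax⟩ := this
    have : a = x₀ := by rw [hx₀, ← hax, Homeomorph.symm_apply_apply]
    rwa [← this]
  -- F = closure {x₀}
  have hFeq : F = closure ({x₀} : Set X) := by
    apply Set.Subset.antisymm
    · intro a ha
      rw [← specializes_iff_mem_closure]
      rw [← hmind.specializes_iff, hmx₀]
      exact hle (m a) ⟨a, ha, rfl⟩
    · exact closure_minimal (Set.singleton_subset_iff.mpr hx₀F) hF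
  refine ⟨x₀, hFeq, ?_⟩
  intro y hy
  have h₁ : x₀ ⤳ y := by
    rw [specializes_iff_mem_closure, ← hFeq]
    rw [hy]; exact subset_closure rfl
  have h₂ : y ⤳ x₀ := by
    rw [specializes_iff_mem_closure, ← hy]
    exact hx₀F
  have h₁' : m x₀ ⤳ m y := h₁.map hmc
  have h₂' : m y ⤳ m x₀ := h₂.map hmc
  have : m y = m x₀ := by
    funext n
    have ha := specializes_prop_iff.mp (specializes_pi.mp h₁' n)
    have hb := specializes_prop_iff.mp (specializes_pi.mp h₂' n)
    exact propext ⟨ha, hb⟩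
  exact hminj this
end
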